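/- Any structure S' compatible with the k-stutter w^[k] of a sequence w under a bipartite energy model induces an interaction multigraph on positions of w that is bipartite with maximum degree at most k, and hence its base pairs can be partitioned into k secondary structures S'₁,…,S'ₖ each compatible with w, with Σᵢ E(w,S'ᵢ) = E(w^[k], S'). -/

import Mathlib

open scoped Classical

/-- An RNA nucleotide. -/
inductive Base | A | U | C | G
deriving DecidableEq, Inhabited, Repr

/-- The Watson-Crick pairing relation (only G-C and A-U pairs allowed). -/
def wcPair : Base → Base → Prop
  | .G, .C => True | .C, .G => True
  | .A, .U => True | .U, .A => True
  | _, _ => False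

/-- The Nussinov-Jacobson pairing relation (G-C, A-U and G-U pairs allowed). -/
def njPair : Base → Base → Prop
  | .G, .C => True | .C, .G => True
  | .A, .U => True | .U, .A => True
  | .G, .U => True | .U, .G => True
  | _, _ => False

/-- An RNA (pseudoknot-free) secondary structure, 0-indexed positions. -/
structure SecStr where
  len : ℕ
  pairs : Finset (ℕ × ℕ)
  lt : ∀ p ∈ pairs, p.1 < p.2
  ub : ∀ p ∈ pairs, p.2 < len
  once : ∀ p ∈ pairs, ∀ q ∈ pairs, p ≠ q →
    p.1 ≠ q.1 ∧ p.1 ≠ q.2 ∧ p.2 ≠ q.1 ∧ p.2 ≠ q.2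
  noncross : ∀ p ∈ pairs, ∀ q ∈ pairs,
    ¬ (p.1 < q.1 ∧ q.1 < p.2 ∧ p.2 < q.2)

def SecStr.pairedAt (S : SecStr) (i : ℕ) : Prop := ∃ p ∈ S.pairs, p.1 = i ∨ p.2 = i
def SecStr.unpairedAt (S : SecStr) (i : ℕ) : Prop := i < S.len ∧ ¬ S.pairedAt i
def SecStr.saturated (S : SecStr) : Prop := ∀ i < S.len, S.pairedAt i

/-- A structure is compatible with a sequence `w` (w.r.t. pairing relation `R`)
if it has the right length and all base pairs are `R`-valid. -/
def compat {α : Type*} [Inhabited α] (R : α → α → Prop) (w : List α) (S : SecStr) : Prop :=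
  S.len = w.length ∧ ∀ p ∈ S.pairs, R (w.getD p.1 default) (w.getD p.2 default)

/-- Base-pair-sum free energy of a structure on a sequence. -/
noncomputable def energy {α : Type*} [Inhabited α] (E : α → α → ℝ) (w : List α)
    (S : SecStr) : ℝ :=
  ∑ p ∈ S.pairs, E (w.getD p.1 default) (w.getD p.2 default)

/-- `w` is a Δ-design for `S`: `S` is compatible with `w`, and every other
compatible structure has energy at least `energy E w S + Δ`. -/
def isDesign {α : Type*} [Inhabited α] (R : α → α → Prop) (E : α → α → ℝ) (Δ : ℝ)
    (w : List α) (S : SecStr) : Prop :=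
  compat R w S ∧ ∀ S' : SecStr, compat R w S' → S' ≠ S →
    energy E w S' ≥ energy E w S + Δ

/- Tree representation machinery. -/
def encloses (q p : ℕ × ℕ) : Prop := q.1 < p.1 ∧ p.2 < q.2
def SecStr.hasParent (S : SecStr) (p : ℕ × ℕ) : Prop := ∃ q ∈ S.pairs, encloses q p
def SecStr.isParentOf (S : SecStr) (q p : ℕ × ℕ) : Prop :=
  q ∈ S.pairs ∧ p ∈ S.pairs ∧ encloses q p ∧ ¬ ∃ m ∈ S.pairs, encloses q m ∧ encloses m p

/-- Degree of a paired node: number of paired children plus one for the parent (if any). -/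
noncomputable def SecStr.pairDeg (S : SecStr) (p : ℕ × ℕ) : ℕ :=
  (S.pairs.filter (fun c => S.isParentOf p c)).card + (if S.hasParent p then 1 else 0)
/-- Degree of the virtual root: number of top-level base pairs. -/
noncomputable def SecStr.rootDeg (S : SecStr) : ℕ :=
  (S.pairs.filter (fun p => ¬ S.hasParent p)).card
/-- All nodes of the tree representation (including the virtual root) have degree ≤ d. -/
def SecStr.degLE (S : SecStr) (d : ℕ) : Prop :=
  S.rootDeg ≤ d ∧ ∀ p ∈ S.pairs, S.pairDeg p ≤ d

/-- A sequence is saturable if a saturated structure is compatible with it. -/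
def saturable {α : Type*} [Inhabited α] (R : α → α → Prop) (w : List α) : Prop :=
  ∃ S : SecStr, compat R w S ∧ S.saturated
/-- Atomic saturable: saturable, and no (nonempty) proper prefix is saturable. -/
def atomicSaturable {α : Type*} [Inhabited α] (R : α → α → Prop) (w : List α) : Prop :=
  saturable R w ∧ ∀ k, 0 < k → k < w.length → ¬ saturable R (w.take k)

/- Motifs. -/
def SecStr.unpChildOfPair (S : SecStr) (q : ℕ × ℕ) (u : ℕ) : Prop :=
  S.unpairedAt u ∧ q.1 < u ∧ u < q.2 ∧
    ¬ ∃ m ∈ S.pairs, q.1 < m.1 ∧ m.1 < u ∧ u < m.2 ∧ m.2 < q.2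
def SecStr.unpChildOfRoot (S : SecStr) (u : ℕ) : Prop :=
  S.unpairedAt u ∧ ¬ ∃ m ∈ S.pairs, m.1 < u ∧ u < m.2
/-- Motif m₅ : a tree node (possibly the root) of degree greater than four. -/
def hasM5 (S : SecStr) : Prop := 4 < S.rootDeg ∨ ∃ p ∈ S.pairs, 4 < S.pairDeg p
/-- Motif m₃∘ : a node with an unpaired child and degree greater than two. -/
def hasM3o (S : SecStr) : Prop :=
  (∃ q ∈ S.pairs, (∃ u, S.unpChildOfPair q u) ∧ 2 < S.pairDeg q) ∨
  ((∃ u, S.unpChildOfRoot u) ∧ 2 < S.rootDeg)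

/- Colorings of the tree representation. -/
inductive Col | black | white | gray
deriving DecidableEq

noncomputable def childCount (S : SecStr) (col : ℕ × ℕ → Col) (q : ℕ × ℕ) (c : Col) : ℕ :=
  (S.pairs.filter (fun p => S.isParentOf q p ∧ col p = c)).card
noncomputable def rootChildCount (S : SecStr) (col : ℕ × ℕ → Col) (c : Col) : ℕ :=
  (S.pairs.filter (fun p => ¬ S.hasParent p ∧ col p = c)).card

/-- A proper coloring of the tree representation. -/
def properCol (S : SecStr) (col : ℕ × ℕ → Col) : Prop :=
  rootChildCount S col .black ≤ 1 ∧ rootChildCount S col .white ≤ 1 ∧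
  rootChildCount S col .gray ≤ 2 ∧
  ∀ q ∈ S.pairs,
    childCount S col q .black ≤ 1 ∧ childCount S col q .white ≤ 1 ∧
    childCount S col q .gray ≤ 2 ∧
    childCount S col q (col q) ≤ 1 ∧
    (col q = .black → ∀ p ∈ S.pairs, S.isParentOf q p → col p ≠ .white) ∧
    (col q = .white → ∀ p ∈ S.pairs, S.isParentOf q p → col p ≠ .black)

/-- Level of a paired node: #black minus #white on the path to the root (incl. itself). -/
noncomputable def pairLvl (S : SecStr) (col : ℕ × ℕ → Col) (p : ℕ × ℕ) : ℤ :=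
  ((S.pairs.filter (fun q => q.1 ≤ p.1 ∧ p.2 ≤ q.2 ∧ col q = .black)).card : ℤ) -
  ((S.pairs.filter (fun q => q.1 ≤ p.1 ∧ p.2 ≤ q.2 ∧ col q = .white)).card : ℤ)
/-- Level of an unpaired node. -/
noncomputable def unpLvl (S : SecStr) (col : ℕ × ℕ → Col) (u : ℕ) : ℤ :=
  ((S.pairs.filter (fun q => q.1 < u ∧ u < q.2 ∧ col q = .black)).card : ℤ) -
  ((S.pairs.filter (fun q => q.1 < u ∧ u < q.2 ∧ col q = .white)).card : ℤ)

/-- Separated coloring: gray-node levels and unpaired-node levels are disjoint. -/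
def separatedCol (S : SecStr) (col : ℕ × ℕ → Col) : Prop :=
  ∀ p ∈ S.pairs, col p = .gray → ∀ u, S.unpairedAt u →
    pairLvl S col p ≠ unpLvl S col u

/-- A bipartite energy model: its compatibility graph is bipartite. -/
def Bipartite {α : Type*} (R : α → α → Prop) : Prop :=
  ∃ f : α → Bool, ∀ a b, R a b → f a ≠ f b

/-- The k-stutter of a sequence. -/
def stutterSeq {α : Type*} (w : List α) (k : ℕ) : List α :=
  w.flatMap (fun a => List.replicate k a)
/-- The base pairs of the k-stutter of a structure. -/
def stutterPairs (S : SecStr) (k : ℕ) : Finset (ℕ × ℕ) :=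
  S.pairs.biUnion (fun p => (Finset.range k).image
    (fun m => (k * p.1 + m, k * p.2 + (k - 1 - m))))

/-- Two base pairs belong to the same band (maximal stack) of S. -/
def sameBand (S : SecStr) (p p' : ℕ × ℕ) : Prop :=
  p ∈ S.pairs ∧ p' ∈ S.pairs ∧ p.1 + p.2 = p'.1 + p'.2 ∧
  ∀ x, min p.1 p'.1 ≤ x → x ≤ max p.1 p'.1 → (x, p.1 + p.2 - x) ∈ S.pairs

/-- Nussinov-Jacobson energies: a for G-C, b for A-U, g for G-U. -/
def njE (a b g : ℝ) : Base → Base → ℝ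
  | .G, .C => a | .C, .G => a
  | .A, .U => b | .U, .A => b
  | .G, .U => g | .U, .G => g
  | _, _ => 0

/-- level of position i : #G minus #C in the prefix of w ending at i. -/
def lvl (w : List Base) (i : ℕ) : ℤ :=
  ((w.take (i+1)).count Base.G : ℤ) - ((w.take (i+1)).count Base.C : ℤ)

/-! The base pairs of `S'` form a multigraph on the blocks of `w^[k]`. A block has `k` positions,
each paired at most once, so all degrees are at most `k`; since the pairing relation is bipartite,
the letter of a block properly 2-colours this multigraph. König's theorem therefore gives a proper
`k`-edge-colouring. Its Kempe-chain proof needs no parity argument once the two sides are kept as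
separate types: the alternating chain leaving the `B`-end `v` of the new edge along colour `α`
enters `A`-vertices only through `α`-edges, so it never reaches the `A`-end, which misses `α`.
Each colour class is a matching of blocks, hence, after contracting blocks, a non-crossing
structure on `w`, and the energy identity is a fibrewise sum. -/

open Finset

section EdgeColoring

variable {ι A B κ : Type*} (a : ι → A) (b : ι → B)

/-- A bipartite multigraph is encoded by its edge set `E` and the endpoint maps `a`, `b` into the
two sides. -/
def IsEdgeColoring (E : Finset ι) (c : ι → κ) : Prop :=
  ∀ e ∈ E, ∀ e' ∈ E, c e = c e' → (a e = a e' ∨ b e = b e') → e = e'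

inductive KempeChain (E : Finset ι) (c : ι → κ) (α β : κ) (v : B) : ι → Prop
  | start {e : ι} : e ∈ E → b e = v → c e = α → KempeChain E c α β v e
  | viaA {e e' : ι} : KempeChain E c α β v e → c e = α → e' ∈ E → a e' = a e → c e' = β →
      KempeChain E c α β v e'
  | viaB {e e' : ι} : KempeChain E c α β v e → c e = β → e' ∈ E → b e' = b e → c e' = α →
      KempeChain E c α β v e'

namespace KempeChain

variable {a b} {E : Finset ι} {c : ι → κ} {α β : κ} {v : B} {e e' : ι}

theorem mem (h : KempeChain a b E c α β v e) : e ∈ E := by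
  cases h <;> assumption

theorem color (h : KempeChain a b E c α β v e) : c e = α ∨ c e = β := by
  cases h <;> simp_all

theorem exists_alpha_edge_at_a (h : KempeChain a b E c α β v e) :
    ∃ e₀, KempeChain a b E c α β v e₀ ∧ c e₀ = α ∧ a e₀ = a e := by
  have h₀ := h
  cases h with
  | start _ _ hα => exact ⟨e, h₀, hα, rfl⟩
  | viaA h₁ hα₁ _ hA _ => exact ⟨_, h₁, hα₁, hA.symm⟩
  | viaB _ _ _ _ hα => exact ⟨e, h₀, hα, rfl⟩

theorem of_adj (hc : IsEdgeColoring a b E c) (hv : ∀ e ∈ E, b e = v → c e ≠ β)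
    (h : KempeChain a b E c α β v e) (he' : e' ∈ E) (hadj : a e = a e' ∨ b e = b e')
    (hcol : c e' = α ∨ c e' = β) : KempeChain a b E c α β v e' := by
  by_cases hee : e = e'
  · exact hee ▸ h
  have hne : c e ≠ c e' := fun h' => hee (hc e h.mem e' he' h' hadj)
  have h₀ := h
  cases h with
  | start _ hbv hα =>
    have hβ : c e' = β := hcol.resolve_left (fun h' => hne (hα.trans h'.symm))
    rcases hadj with hA | hB
    · exact .viaA h₀ hα he' hA.symm hβ
    · exact absurd hβ (hv e' he' (hB.symm.trans hbv))
  | viaA h₁ hα₁ _ hA₁ hβ =>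
    have hα : c e' = α := hcol.resolve_right (fun h' => hne (hβ.trans h'.symm))
    rcases hadj with hA | hB
    · exact hc _ h₁.mem e' he' (hα₁.trans hα.symm) (.inl (hA₁.symm.trans hA)) ▸ h₁
    · exact .viaB h₀ hβ he' hB.symm hα
  | viaB h₁ hβ₁ _ hB₁ hα =>
    have hβ : c e' = β := hcol.resolve_left (fun h' => hne (hα.trans h'.symm))
    rcases hadj with hA | hB
    · exact .viaA h₀ hα he' hA.symm hβ
    · exact hc _ h₁.mem e' he' (hβ₁.trans hβ.symm) (.inr (hB₁.symm.trans hB)) ▸ h₁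

end KempeChain

noncomputable def kempeSwap (E : Finset ι) (c : ι → κ) (α β : κ) (v : B) (e : ι) : κ :=
  if KempeChain a b E c α β v e then Equiv.swap α β (c e) else c e

variable {a b} {E : Finset ι} {c : ι → κ} {α β : κ} {v : B}

theorem isEdgeColoring_kempeSwap (hc : IsEdgeColoring a b E c)
    (hv : ∀ e ∈ E, b e = v → c e ≠ β) : IsEdgeColoring a b E (kempeSwap a b E c α β v) := by
  have swapped_color {e e' : ι} (h : KempeChain a b E c α β v e)
      (hce : Equiv.swap α β (c e) = c e') : c e' = α ∨ c e' = β := by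
    rcases h.color with hce₀ | hce₀ <;> simp [← hce, hce₀]
  intro e he e' he' hce hadj
  unfold kempeSwap at hce
  by_cases h : KempeChain a b E c α β v e <;> by_cases h' : KempeChain a b E c α β v e' <;>
    simp only [h, h', if_true, if_false] at hce
  · exact hc e he e' he' ((Equiv.swap α β).injective hce) hadj
  · exact absurd (h.of_adj hc hv he' hadj (swapped_color h hce)) h'
  · exact absurd (h'.of_adj hc hv he (hadj.imp Eq.symm Eq.symm) (swapped_color h' hce.symm)) h
  · exact hc e he e' he' hce hadj

theorem kempeSwap_ne_of_a_eq {u : A} (hu : ∀ e ∈ E, a e = u → c e ≠ α) {e : ι} (he : e ∈ E)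
    (hau : a e = u) : kempeSwap a b E c α β v e ≠ α := by
  unfold kempeSwap
  split_ifs with h
  · obtain ⟨e₀, h₀, hα, ha⟩ := h.exists_alpha_edge_at_a
    exact absurd hα (hu e₀ h₀.mem (ha.trans hau))
  · exact hu e he hau

theorem kempeSwap_ne_of_b_eq (hv : ∀ e ∈ E, b e = v → c e ≠ β) {e : ι} (he : e ∈ E)
    (hbv : b e = v) : kempeSwap a b E c α β v e ≠ α := by
  unfold kempeSwap
  split_ifs with h
  · intro hα
    exact hv e he hbv (by simpa using congrArg (Equiv.swap α β) hα)
  · exact fun hα => h (.start he hbv hα)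

theorem exists_forall_ne_of_card_lt [Fintype κ] (c : ι → κ) {s : Finset ι}
    (hs : #s < Fintype.card κ) : ∃ α, ∀ e ∈ s, c e ≠ α := by
  obtain ⟨α, -, hα⟩ := exists_mem_notMem_of_card_lt_card (t := univ) (card_image_le.trans_lt hs)
  exact ⟨α, fun e he hce => hα (hce ▸ mem_image_of_mem c he)⟩

theorem card_filter_lt_of_insert {V : Type*} {E : Finset ι} {e₀ : ι} (he₀ : e₀ ∉ E) (f : ι → V)
    {n : ℕ} (hn : #{e ∈ insert e₀ E | f e = f e₀} ≤ n) : #{e ∈ E | f e = f e₀} < n := by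
  rw [filter_insert, if_pos rfl, card_insert_of_notMem (fun h => he₀ (mem_filter.1 h).1)] at hn
  omega

variable (a b)

/-- König's edge colouring theorem for bipartite multigraphs. -/
theorem exists_isEdgeColoring [Fintype κ] [Nonempty κ] (E : Finset ι)
    (hA : ∀ x, #{e ∈ E | a e = x} ≤ Fintype.card κ)
    (hB : ∀ y, #{e ∈ E | b e = y} ≤ Fintype.card κ) :
    ∃ c : ι → κ, IsEdgeColoring a b E c := by
  induction E using Finset.induction_on with
  | empty => exact ⟨fun _ => Classical.arbitrary κ, by simp [IsEdgeColoring]⟩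
  | insert e₀ E he₀ ih =>
    have hu := card_filter_lt_of_insert he₀ a (hA (a e₀))
    have hv := card_filter_lt_of_insert he₀ b (hB (b e₀))
    have hsub (p : ι → Prop) : #{e ∈ E | p e} ≤ #{e ∈ insert e₀ E | p e} :=
      card_le_card (filter_subset_filter _ (subset_insert _ _))
    obtain ⟨c, hc⟩ := ih (fun x => (hsub _).trans (hA x)) (fun y => (hsub _).trans (hB y))
    obtain ⟨α, hα⟩ := exists_forall_ne_of_card_lt c hu
    obtain ⟨β, hβ⟩ := exists_forall_ne_of_card_lt c hv
    replace hα : ∀ e ∈ E, a e = a e₀ → c e ≠ α := fun e he h => hα e (mem_filter.2 ⟨he, h⟩)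
    replace hβ : ∀ e ∈ E, b e = b e₀ → c e ≠ β := fun e he h => hβ e (mem_filter.2 ⟨he, h⟩)
    have hα₀ : ∀ e ∈ E, (a e₀ = a e ∨ b e₀ = b e) → kempeSwap a b E c α β (b e₀) e ≠ α :=
      fun e he h => h.elim (fun h => kempeSwap_ne_of_a_eq hα he h.symm)
        (fun h => kempeSwap_ne_of_b_eq hβ he h.symm)
    have hc' := isEdgeColoring_kempeSwap (α := α) hc hβ
    refine ⟨Function.update (kempeSwap a b E c α β (b e₀)) e₀ α, ?_⟩
    have hne {e : ι} (he : e ∈ E) : e ≠ e₀ := fun h => he₀ (h ▸ he)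
    intro e he e' he' hce hadj
    rcases mem_insert.1 he with rfl | heE <;> rcases mem_insert.1 he' with rfl | he'E
    · rfl
    · rw [Function.update_self, Function.update_of_ne (hne he'E)] at hce
      exact absurd hce.symm (hα₀ e' he'E hadj)
    · rw [Function.update_self, Function.update_of_ne (hne heE)] at hce
      exact absurd hce (hα₀ e heE (hadj.imp Eq.symm Eq.symm))
    · rw [Function.update_of_ne (hne heE), Function.update_of_ne (hne he'E)] at hce
      exact hc' e heE e' he'E hce hadj

theorem exists_edgeColoring_of_bipartite [Fintype κ] [Nonempty κ] {V : Type*} (v₁ v₂ : ι → V)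
    (g : V → Bool) (E : Finset ι) (hg : ∀ e ∈ E, g (v₁ e) ≠ g (v₂ e))
    (hdeg : ∀ x, #{e ∈ E | v₁ e = x ∨ v₂ e = x} ≤ Fintype.card κ) :
    ∃ c : ι → κ, ∀ e ∈ E, ∀ e' ∈ E, c e = c e' →
      ∀ x, (v₁ e = x ∨ v₂ e = x) → (v₁ e' = x ∨ v₂ e' = x) → e = e' := by
  let side (s : Bool) (e : ι) : V := if g (v₁ e) = s then v₁ e else v₂ e
  have side_eq {e : ι} (he : e ∈ E) {x : V} (hx : v₁ e = x ∨ v₂ e = x) : side (g x) e = x := by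
    rcases hx with rfl | rfl
    · simp [side]
    · simp [side, hg e he]
  have hdeg_side (s : Bool) (x : V) : #{e ∈ E | side s e = x} ≤ Fintype.card κ := by
    refine (card_le_card fun e he => ?_).trans (hdeg x)
    rw [mem_filter] at he ⊢
    refine ⟨he.1, ?_⟩
    rw [← he.2]
    by_cases h : g (v₁ e) = s <;> simp [side, h]
  obtain ⟨c, hc⟩ := exists_isEdgeColoring (side false) (side true) E (hdeg_side false)
    (hdeg_side true)
  refine ⟨c, fun e he e' he' hce x hx hx' => hc e he e' he' hce ?_⟩
  have hside := (side_eq he hx).trans (side_eq he' hx').symm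
  cases hgx : g x
  · exact .inl (hgx ▸ hside)
  · exact .inr (hgx ▸ hside)

end EdgeColoring

theorem sum_fiberwise_map_val {ι κ β : Type*} [Fintype κ] [DecidableEq κ] (s : Finset ι)
    (g : ι → κ) (f : ι → β) : ∑ j, {i ∈ s | g i = j}.val.map f = s.val.map f := by
  have map_val (t : Finset ι) : t.val.map f = ∑ i ∈ t, {f i} := by
    rw [sum_eq_multiset_sum, ← Multiset.sum_map_singleton (t.val.map f), Multiset.map_map]
    rfl
  simp only [map_val]
  exact sum_fiberwise s g _

section Stutter

variable {α : Type*} (w : List α) {k : ℕ}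

theorem stutterSeq_length (k : ℕ) : (stutterSeq w k).length = k * w.length := by
  simp [stutterSeq, mul_comm]

theorem stutterSeq_getD (hk : 0 < k) (d : α) (j : ℕ) :
    (stutterSeq w k).getD j d = w.getD (j / k) d := by
  induction w generalizing j with
  | nil => simp [stutterSeq]
  | cons a w ih =>
    have hcons : stutterSeq (a :: w) k = List.replicate k a ++ stutterSeq w k := by
      simp [stutterSeq]
    rw [hcons]
    by_cases hj : j < k
    · rw [List.getD_append _ _ _ _ (by simpa using hj), Nat.div_eq_of_lt hj]
      simp [hj]
    · rw [not_lt] at hj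
      rw [List.getD_append_right _ _ _ _ (by simpa using hj), List.length_replicate, ih,
        Nat.div_eq_sub_div hk hj]
      simp

variable [Inhabited α]

theorem compat_stutterSeq_iff (hk : 0 < k) (R : α → α → Prop) (S : SecStr) :
    compat R (stutterSeq w k) S ↔ S.len = k * w.length ∧
      ∀ p ∈ S.pairs, R (w.getD (p.1 / k) default) (w.getD (p.2 / k) default) := by
  simp only [compat, stutterSeq_length, stutterSeq_getD w hk]

theorem energy_stutterSeq (hk : 0 < k) (E : α → α → ℝ) (S : SecStr) :
    energy E (stutterSeq w k) S =
      ∑ p ∈ S.pairs, E (w.getD (p.1 / k) default) (w.getD (p.2 / k) default) := by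
  simp only [energy, stutterSeq_getD w hk]

end Stutter

theorem mem_Ico_of_div_eq {j k x : ℕ} (hk : 0 < k) (h : j / k = x) :
    j ∈ Ico (k * x) (k * x + k) := by
  rw [mem_Ico, ← h]
  refine ⟨Nat.mul_div_le j k, ?_⟩
  have := Nat.lt_div_mul_add hk (a := j)
  rw [mul_comm]
  linarith

namespace SecStr

variable (S : SecStr)

theorem eq_of_common_endpoint {p q : ℕ × ℕ} (hp : p ∈ S.pairs) (hq : q ∈ S.pairs) {i : ℕ}
    (hpi : p.1 = i ∨ p.2 = i) (hqi : q.1 = i ∨ q.2 = i) : p = q := by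
  by_contra hpq
  have := S.once p hp q hq hpq
  rcases hpi with rfl | rfl <;> rcases hqi with h | h <;> simp_all

theorem card_filter_block_le {k : ℕ} (hk : 0 < k) (x : ℕ) :
    #{p ∈ S.pairs | p.1 / k = x ∨ p.2 / k = x} ≤ k := by
  let pos (p : ℕ × ℕ) : ℕ := if p.1 / k = x then p.1 else p.2
  have pos_eq (p : ℕ × ℕ) : p.1 = pos p ∨ p.2 = pos p := by
    by_cases h : p.1 / k = x <;> simp [pos, h]
  calc #{p ∈ S.pairs | p.1 / k = x ∨ p.2 / k = x}
      ≤ #(Ico (k * x) (k * x + k)) := by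
        refine card_le_card_of_injOn pos (fun p hp => ?_) (fun p hp q hq hpq => ?_)
        · rw [mem_coe, mem_filter] at hp
          by_cases h : p.1 / k = x
          · simpa [pos, h] using mem_Ico_of_div_eq hk h
          · simpa [pos, h] using mem_Ico_of_div_eq hk (hp.2.resolve_left h)
        · exact S.eq_of_common_endpoint (mem_filter.1 hp).1 (mem_filter.1 hq).1 (pos_eq p)
            (hpq ▸ pos_eq q)
    _ = k := by simp

end SecStr

def blockPair (k : ℕ) (p : ℕ × ℕ) : ℕ × ℕ := (p.1 / k, p.2 / k)

/-- `F` is a matching in the interaction multigraph, whose vertices are the blocks `p / k`. -/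
def IsBlockMatching (k : ℕ) (F : Finset (ℕ × ℕ)) : Prop :=
  (∀ p ∈ F, p.1 / k ≠ p.2 / k) ∧
    ∀ p ∈ F, ∀ q ∈ F, ∀ x, (p.1 / k = x ∨ p.2 / k = x) → (q.1 / k = x ∨ q.2 / k = x) → p = q

theorem IsBlockMatching.injOn_blockPair {k : ℕ} {F : Finset (ℕ × ℕ)} (hF : IsBlockMatching k F) :
    Set.InjOn (blockPair k) F :=
  fun p hp q hq h => hF.2 p hp q hq _ (.inl rfl) (.inl (congrArg Prod.fst h).symm)

namespace SecStr

variable (S : SecStr) {k n : ℕ}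

def blockQuotient (hlen : S.len ≤ k * n) (F : Finset (ℕ × ℕ)) (hFS : F ⊆ S.pairs)
    (hF : IsBlockMatching k F) : SecStr where
  len := n
  pairs := F.image (blockPair k)
  lt := by
    simp only [forall_mem_image, blockPair]
    exact fun p hp => (Nat.div_le_div_right (S.lt p (hFS hp)).le).lt_of_ne (hF.1 p hp)
  ub := by
    simp only [forall_mem_image, blockPair]
    exact fun p hp => Nat.div_lt_of_lt_mul ((S.ub p (hFS hp)).trans_le hlen)
  once := by
    simp only [forall_mem_image, blockPair]
    intro p hp q hq hpq
    have hpq' : p ≠ q := fun h => hpq (h ▸ rfl)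
    exact ⟨fun h => hpq' (hF.2 p hp q hq _ (.inl rfl) (.inl h.symm)),
      fun h => hpq' (hF.2 p hp q hq _ (.inl rfl) (.inr h.symm)),
      fun h => hpq' (hF.2 p hp q hq _ (.inr rfl) (.inl h.symm)),
      fun h => hpq' (hF.2 p hp q hq _ (.inr rfl) (.inr h.symm))⟩
  noncross := by
    simp only [forall_mem_image, blockPair]
    rintro p hp q hq ⟨h₁, h₂, h₃⟩
    exact S.noncross p (hFS hp) q (hFS hq)
      ⟨Nat.lt_of_div_lt_div h₁, Nat.lt_of_div_lt_div h₂, Nat.lt_of_div_lt_div h₃⟩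

variable {S} {hlen : S.len ≤ k * n} {F : Finset (ℕ × ℕ)} {hFS : F ⊆ S.pairs}
  {hF : IsBlockMatching k F}

theorem blockQuotient_pairs_val :
    (S.blockQuotient hlen F hFS hF).pairs.val = F.val.map (blockPair k) :=
  image_val_of_injOn hF.injOn_blockPair

variable {α : Type*} [Inhabited α] (w : List α)

theorem energy_blockQuotient (E : α → α → ℝ) :
    energy E w (S.blockQuotient hlen F hFS hF) =
      ∑ p ∈ F, E (w.getD (p.1 / k) default) (w.getD (p.2 / k) default) :=
  sum_image hF.injOn_blockPair

theorem compat_blockQuotient {R : α → α → Prop} (hn : n = w.length)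
    (hR : ∀ p ∈ F, R (w.getD (p.1 / k) default) (w.getD (p.2 / k) default)) :
    compat R w (S.blockQuotient hlen F hFS hF) :=
  ⟨hn, by simpa only [blockQuotient, forall_mem_image, blockPair] using hR⟩

end SecStr

/-- any structure compatible with the k-stutter of w (bipartite
model) induces a bipartite interaction multigraph of max degree ≤ k on the
positions of w, and its base pairs can be partitioned into k structures
compatible with w whose energies sum to that of the whole structure. -/
theorem stmt16 {α : Type*} [Inhabited α] (R : α → α → Prop) (E : α → α → ℝ)
    (hbip : Bipartite R) (w : List α) (k : ℕ) (hk : 1 ≤ k)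
    (S' : SecStr) (hcomp : compat R (stutterSeq w k) S') :
    -- max degree ≤ k in the interaction multigraph:
    (∀ i < w.length,
        (S'.pairs.filter (fun p => p.1 / k = i ∨ p.2 / k = i)).card ≤ k) ∧
    -- bipartiteness of the interaction multigraph:
    (∃ g : ℕ → Bool, ∀ p ∈ S'.pairs, g (p.1 / k) ≠ g (p.2 / k)) ∧
    -- partition into k structures on w:
    ∃ f : Fin k → SecStr,
      (∀ i, compat R w (f i)) ∧
      (S'.pairs.val.map (fun p => (p.1 / k, p.2 / k)) = ∑ i : Fin k, (f i).pairs.val) ∧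
      (∑ i : Fin k, energy E w (f i) = energy E (stutterSeq w k) S') := by
  obtain ⟨side, hside⟩ := hbip
  obtain ⟨hlen, hR⟩ := (compat_stutterSeq_iff w hk R S').1 hcomp
  let g (i : ℕ) : Bool := side (w.getD i default)
  have hg : ∀ p ∈ S'.pairs, g (p.1 / k) ≠ g (p.2 / k) := fun p hp => hside _ _ (hR p hp)
  have hdeg := S'.card_filter_block_le hk
  have : NeZero k := ⟨by omega⟩
  obtain ⟨c, hc⟩ := exists_edgeColoring_of_bipartite (κ := Fin k) (·.1 / k) (·.2 / k) g S'.pairs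
    hg (fun x => by convert hdeg x; simp)
  have hM (i : Fin k) : IsBlockMatching k {p ∈ S'.pairs | c p = i} := by
    refine ⟨fun p hp h => hg p (mem_filter.1 hp).1 (congrArg g h), fun p hp q hq => ?_⟩
    rw [mem_filter] at hp hq
    exact hc p hp.1 q hq.1 (hp.2.trans hq.2.symm)
  let f (i : Fin k) : SecStr := S'.blockQuotient hlen.le _ (filter_subset _ _) (hM i)
  refine ⟨fun i _ => hdeg i, ⟨g, hg⟩, f, fun i => SecStr.compat_blockQuotient w rfl
    (fun p hp => hR p (mem_filter.1 hp).1), ?_, ?_⟩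
  · simp only [f, SecStr.blockQuotient_pairs_val]
    exact (sum_fiberwise_map_val S'.pairs c (blockPair k)).symm
  · simp only [f, SecStr.energy_blockQuotient, energy_stutterSeq w hk]
    exact sum_fiberwise S'.pairs c _
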